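/- Let R, R', D, D' be real random variables in L⁴ with fourth moments bounded by M ≥ 1, with D and D' independent, and suppose P({|D − R| > ε} ∪ {|D' − R'| > ε}) < ε for some ε ∈ (0,1]. Then |E[R R'] − E[D] E[D']| ≤ C √ε for a constant C depending only on M. -/

import Mathlib

/-!
By independence `E[D] E[D'] = E[DD']`, and
`E[RR'] - E[DD'] = E[R'(R - D)] + E[D(R' - D')]`.
In each term the difference is at most `ε` off the exceptional set `S`, which contributes
`ε E|X| ≤ ε M`, while on `S` Cauchy–Schwarz gives `‖X (A - B)‖₂ √P(S) ≤ 2M √ε`, the `L²` norm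
being controlled by the fourth moments through `x² (a - b)² ≤ 2x⁴ + a⁴ + b⁴`.
-/

open MeasureTheory ProbabilityTheory
open scoped ENNReal

instance : ENNReal.HolderTriple 4 4 2 where
  inv_add_inv_eq_inv := by
    rw [← ENNReal.add_halves (2⁻¹ : ℝ≥0∞), ENNReal.div_eq_inv_mul,
      ← ENNReal.mul_inv (by simp) (by simp)]
    norm_num

section

variable {Ω : Type*} [MeasurableSpace Ω] {P : Measure Ω}

theorem MeasureTheory.MemLp.integrable_pow_four {X : Ω → ℝ} (hX : MemLp X 4 P) :
    Integrable (fun ω ↦ X ω ^ 4) P := by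
  simpa [Even.pow_abs ⟨2, rfl⟩] using hX.integrable_norm_pow (p := 4) four_ne_zero

theorem setIntegral_abs_le_sqrt_integral_sq_mul_sqrt [IsFiniteMeasure P] {f : Ω → ℝ}
    (hf : MemLp f 2 P) (T : Set Ω) :
    ∫ ω in T, |f ω| ∂P ≤ √(∫ ω, f ω ^ 2 ∂P) * √(P.real T) := by
  have holder := integral_mul_le_Lp_mul_Lq_of_nonneg (μ := P.restrict T)
    Real.HolderConjugate.two_two (f := fun ω ↦ |f ω|) (g := fun _ ↦ (1 : ℝ))
    (.of_forall fun ω ↦ abs_nonneg _) (.of_forall fun _ ↦ zero_le_one)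
    (by rw [ENNReal.ofReal_ofNat]; exact (hf.restrict T).abs) (by simpa using memLp_const 1)
  have hsq : ∫ ω in T, f ω ^ 2 ∂P ≤ ∫ ω, f ω ^ 2 ∂P :=
    setIntegral_le_integral hf.integrable_sq (.of_forall fun ω ↦ sq_nonneg _)
  simp only [mul_one, Real.rpow_two, sq_abs, one_pow, setIntegral_const, smul_eq_mul] at holder
  rw [← Real.sqrt_eq_rpow, ← Real.sqrt_eq_rpow] at holder
  exact holder.trans (by gcongr)

theorem abs_integral_mul_le_of_abs_le_off [IsFiniteMeasure P] {X W : Ω → ℝ}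
    (hX : Integrable X P) (hXW : MemLp (fun ω ↦ X ω * W ω) 2 P) {ε : ℝ} (hε : 0 ≤ ε)
    {S : Set Ω} (hW : ∀ ω ∉ S, |W ω| ≤ ε) :
    |∫ ω, X ω * W ω ∂P| ≤
      ε * ∫ ω, |X ω| ∂P + √(∫ ω, (X ω * W ω) ^ 2 ∂P) * √(P.real S) := by
  set T := toMeasurable P S
  have hT : MeasurableSet T := measurableSet_toMeasurable P S
  have hXW_int : Integrable (fun ω ↦ |X ω * W ω|) P := (hXW.integrable one_le_two).abs
  have hsplit : ∀ ω, |X ω * W ω| ≤ ε * |X ω| + T.indicator (fun ω ↦ |X ω * W ω|) ω := by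
    intro ω
    by_cases hω : ω ∈ T
    · simp only [Set.indicator_of_mem hω]
      nlinarith [abs_nonneg (X ω)]
    · have hWω := hW ω fun hS ↦ hω (subset_toMeasurable P S hS)
      rw [Set.indicator_of_notMem hω, add_zero, abs_mul, mul_comm]
      exact mul_le_mul_of_nonneg_right hWω (abs_nonneg _)
  calc |∫ ω, X ω * W ω ∂P| ≤ ∫ ω, |X ω * W ω| ∂P := abs_integral_le_integral_abs
    _ ≤ ∫ ω, (ε * |X ω| + T.indicator (fun ω ↦ |X ω * W ω|) ω) ∂P :=
      integral_mono hXW_int (hX.abs.const_mul ε |>.add (hXW_int.indicator hT)) hsplit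
    _ = ε * ∫ ω, |X ω| ∂P + ∫ ω in T, |X ω * W ω| ∂P := by
      rw [integral_add (hX.abs.const_mul ε) (hXW_int.indicator hT), integral_const_mul,
        integral_indicator hT]
    _ ≤ ε * ∫ ω, |X ω| ∂P + √(∫ ω, (X ω * W ω) ^ 2 ∂P) * √(P.real S) := by
      rw [measureReal_def, ← measure_toMeasurable, ← measureReal_def]
      gcongr
      exact setIntegral_abs_le_sqrt_integral_sq_mul_sqrt hXW T

theorem integral_abs_le_of_integral_pow_four_le [IsProbabilityMeasure P] {X : Ω → ℝ}
    (hX : MemLp X 4 P) {M : ℝ} (hM : 1 ≤ M) (hXM : ∫ ω, X ω ^ 4 ∂P ≤ M) :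
    ∫ ω, |X ω| ∂P ≤ M := by
  have amgm : ∀ x : ℝ, |x| ≤ (3 + x ^ 4) / 4 := fun x ↦ by
    rw [← Even.pow_abs ⟨2, rfl⟩]
    nlinarith [sq_nonneg (|x| - 1), sq_nonneg (|x| + 1), abs_nonneg x]
  calc ∫ ω, |X ω| ∂P ≤ ∫ ω, (3 + X ω ^ 4) / 4 ∂P :=
        integral_mono (hX.integrable (by norm_num)).abs
          ((integrable_const 3).add hX.integrable_pow_four |>.div_const 4) fun ω ↦ amgm (X ω)
    _ = (3 + ∫ ω, X ω ^ 4 ∂P) / 4 := by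
        rw [integral_div, integral_add (integrable_const 3) hX.integrable_pow_four]
        simp
    _ ≤ M := by linarith

theorem integral_sq_mul_sub_le {X A B : Ω → ℝ} (hX : MemLp X 4 P) (hA : MemLp A 4 P)
    (hB : MemLp B 4 P) :
    ∫ ω, (X ω * (A ω - B ω)) ^ 2 ∂P ≤
      2 * ∫ ω, X ω ^ 4 ∂P + ∫ ω, A ω ^ 4 ∂P + ∫ ω, B ω ^ 4 ∂P := by
  have pointwise : ∀ x a b : ℝ, (x * (a - b)) ^ 2 ≤ 2 * x ^ 4 + a ^ 4 + b ^ 4 := fun x a b ↦ by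
    nlinarith [sq_nonneg (x ^ 2 - a ^ 2), sq_nonneg (x ^ 2 - b ^ 2), sq_nonneg (a + b),
      sq_nonneg x, mul_nonneg (sq_nonneg x) (sq_nonneg (a + b))]
  have hX4 := hX.integrable_pow_four.const_mul 2
  have hA4 := hA.integrable_pow_four
  have hXA : Integrable (fun ω ↦ 2 * X ω ^ 4 + A ω ^ 4) P := hX4.add hA4
  have hB4 := hB.integrable_pow_four
  calc ∫ ω, (X ω * (A ω - B ω)) ^ 2 ∂P ≤ ∫ ω, (2 * X ω ^ 4 + A ω ^ 4 + B ω ^ 4) ∂P :=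
        integral_mono ((hA.sub hB).mul' hX).integrable_sq (hXA.add hB4)
          fun ω ↦ pointwise (X ω) (A ω) (B ω)
    _ = 2 * ∫ ω, X ω ^ 4 ∂P + ∫ ω, A ω ^ 4 ∂P + ∫ ω, B ω ^ 4 ∂P := by
        rw [integral_add hXA hB4, integral_add hX4 hA4, integral_const_mul]

theorem abs_integral_mul_sub_le_of_coupling [IsProbabilityMeasure P] {X A B : Ω → ℝ}
    (hX : MemLp X 4 P) (hA : MemLp A 4 P) (hB : MemLp B 4 P) {M : ℝ} (hM : 1 ≤ M)
    (hXM : ∫ ω, X ω ^ 4 ∂P ≤ M) (hAM : ∫ ω, A ω ^ 4 ∂P ≤ M) (hBM : ∫ ω, B ω ^ 4 ∂P ≤ M)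
    {ε : ℝ} (hε : 0 < ε) (hε1 : ε ≤ 1) {S : Set Ω} (hS : P.real S ≤ ε)
    (hAB : ∀ ω ∉ S, |A ω - B ω| ≤ ε) :
    |∫ ω, X ω * (A ω - B ω) ∂P| ≤ 3 * M * √ε := by
  have hsplit := abs_integral_mul_le_of_abs_le_off (hX.integrable (by norm_num))
    ((hA.sub hB).mul' hX) hε.le hAB
  have hX1 : ∫ ω, |X ω| ∂P ≤ M := integral_abs_le_of_integral_pow_four_le hX hM hXM
  have hXAB : √(∫ ω, (X ω * (A ω - B ω)) ^ 2 ∂P) ≤ 2 * M := by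
    rw [Real.sqrt_le_left (by linarith)]
    nlinarith [integral_sq_mul_sub_le hX hA hB]
  have hεS : √(P.real S) ≤ √ε := Real.sqrt_le_sqrt hS
  have hε_sqrt : ε ≤ √ε := by
    nlinarith [Real.mul_self_sqrt hε.le, Real.sqrt_le_one.mpr hε1, Real.sqrt_nonneg ε]
  calc |∫ ω, X ω * (A ω - B ω) ∂P|
      ≤ ε * ∫ ω, |X ω| ∂P + √(∫ ω, (X ω * (A ω - B ω)) ^ 2 ∂P) * √(P.real S) := hsplit
    _ ≤ √ε * M + 2 * M * √ε := by gcongr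
    _ = 3 * M * √ε := by ring

theorem integral_mul_sub_integral_mul_eq [IsFiniteMeasure P] {R R' D D' : Ω → ℝ}
    (hR : MemLp R 4 P) (hR' : MemLp R' 4 P) (hD : MemLp D 4 P) (hD' : MemLp D' 4 P) :
    ∫ ω, R ω * R' ω ∂P - ∫ ω, D ω * D' ω ∂P =
      ∫ ω, R' ω * (R ω - D ω) ∂P + ∫ ω, D ω * (R' ω - D' ω) ∂P := by
  have h₁ : Integrable (fun ω ↦ R' ω * (R ω - D ω)) P :=
    ((hR.sub hD).mul' hR').integrable one_le_two
  have h₂ : Integrable (fun ω ↦ D ω * (R' ω - D' ω)) P :=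
    ((hR'.sub hD').mul' hD).integrable one_le_two
  rw [← integral_sub ((hR'.mul' hR).integrable one_le_two) ((hD'.mul' hD).integrable one_le_two),
    ← integral_add h₁ h₂]
  congr with ω
  ring

end

/-- Second-moment coupling estimate: if `R, R', D, D'` have fourth moments
bounded by `M ≥ 1`, `D` and `D'` are independent and
`P({|D − R| > ε} ∪ {|D' − R'| > ε}) < ε` with `ε ∈ (0,1]`, then
`|E[R R'] − E[D] E[D']| ≤ 8 M √ε`. -/
theorem stmt_8 (Ω : Type*) [MeasurableSpace Ω] (P : Measure Ω) [IsProbabilityMeasure P]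
    (R R' D D' : Ω → ℝ)
    (hR : MemLp R 4 P) (hR' : MemLp R' 4 P) (hD : MemLp D 4 P) (hD' : MemLp D' 4 P)
    (M : ℝ) (hM : 1 ≤ M)
    (hRM : ∫ ω, (R ω) ^ 4 ∂P ≤ M) (hR'M : ∫ ω, (R' ω) ^ 4 ∂P ≤ M)
    (hDM : ∫ ω, (D ω) ^ 4 ∂P ≤ M) (hD'M : ∫ ω, (D' ω) ^ 4 ∂P ≤ M)
    (hindep : IndepFun D D' P)
    (ε : ℝ) (hε : 0 < ε) (hε1 : ε ≤ 1)
    (hcoup : (P ({ω | ε < |D ω - R ω|} ∪ {ω | ε < |D' ω - R' ω|})).toReal < ε) :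
    |(∫ ω, R ω * R' ω ∂P) - (∫ ω, D ω ∂P) * ∫ ω, D' ω ∂P| ≤ 8 * M * Real.sqrt ε := by
  set S := {ω | ε < |D ω - R ω|} ∪ {ω | ε < |D' ω - R' ω|}
  have hS : P.real S ≤ ε := hcoup.le
  have h₁ := abs_integral_mul_sub_le_of_coupling hR' hR hD hM hR'M hRM hDM hε hε1 hS
    fun ω hω ↦ by rw [abs_sub_comm]; exact not_lt.mp fun h ↦ hω (Or.inl h)
  have h₂ := abs_integral_mul_sub_le_of_coupling hD hR' hD' hM hDM hR'M hD'M hε hε1 hS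
    fun ω hω ↦ by rw [abs_sub_comm]; exact not_lt.mp fun h ↦ hω (Or.inr h)
  calc |(∫ ω, R ω * R' ω ∂P) - (∫ ω, D ω ∂P) * ∫ ω, D' ω ∂P|
      = |∫ ω, R' ω * (R ω - D ω) ∂P + ∫ ω, D ω * (R' ω - D' ω) ∂P| := by
        rw [← hindep.integral_fun_mul_eq_mul_integral hD.aestronglyMeasurable
          hD'.aestronglyMeasurable, integral_mul_sub_integral_mul_eq hR hR' hD hD']
    _ ≤ |∫ ω, R' ω * (R ω - D ω) ∂P| + |∫ ω, D ω * (R' ω - D' ω) ∂P| := abs_add_le _ _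
    _ ≤ 8 * M * √ε := by nlinarith [Real.sqrt_nonneg ε]
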